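/- Let q > 1 be an integer and 𝔖* a reduced splitting filtration of order N with M_{𝔖*,q} > 0. Then for every s in the branch polytope BP_{𝔖*}, the sum of the level functions J_{𝔖,q}(0, s) over all splitting filtrations 𝔖 with B(𝔖) = B(𝔖*) equals the branch function I_{𝔖*,q}(s) = (M_{𝔖*,q}/q^{N−1}) ∏_{λ ∈ B(𝔖*), λ ≠ [N]} (q^{e_λ(s)} − 1)^{−1}. -/

import Mathlib

open Finset MeasureTheory

noncomputable section

structure SplittingFiltration (N : ℕ) where
  L : ℕ
  π : ℕ → Finpartition (Finset.univ : Finset (Fin N))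
  top_eq : (π 0).parts = {Finset.univ}
  strict : ∀ ℓ < L, π (ℓ + 1) < π ℓ
  bot_eq : ∀ ℓ, L ≤ ℓ → π ℓ = ⊥

namespace SplittingFiltration

variable {N : ℕ} (S : SplittingFiltration N)

/-- The branch set: non-singleton blocks appearing in levels `0,…,L−1`. -/
def branches : Finset (Finset (Fin N)) :=
  ((Finset.range S.L).biUnion fun ℓ => (S.π ℓ).parts).filter fun b => 1 < b.card

/-- The branch depth: the largest level index `ℓ < L` whose partition contains `b`. -/
def depth (b : Finset (Fin N)) : ℕ := sSup {ℓ | ℓ < S.L ∧ b ∈ (S.π ℓ).parts}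

/-- The branch degree: the number of blocks of the next level contained in `b`. -/
def deg (b : Finset (Fin N)) : ℕ := ((S.π (S.depth b + 1)).parts.filter fun c => c ⊆ b).card

/-- The multiplicity `M_{𝔖,q}`, a product of falling factorials `(q−1)_{deg−1}`. -/
def mult (q : ℕ) : ℕ := ∏ b ∈ S.branches, (q - 1).descFactorial (S.deg b - 1)

/-- A splitting filtration is reduced if each branch lies in exactly one level. -/
def Reduced : Prop := ∀ b ∈ S.branches, ∃! ℓ, ℓ < S.L ∧ b ∈ (S.π ℓ).parts

end SplittingFiltration

/-- The rank of a partition of `[N]`: `N` minus the number of blocks. -/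
def prank {N : ℕ} (P : Finpartition (Finset.univ : Finset (Fin N))) : ℕ :=
  N - P.parts.card

/-- The set of ordered pairs `(i,j)` with `i < j`. -/
def pairFinset (N : ℕ) : Finset (Fin N × Fin N) := Finset.univ.filter fun p => p.1 < p.2

/-- `Σ_{i<j, i,j ∈ b} s i j`. -/
def pairSum {N : ℕ} (s : Fin N → Fin N → ℂ) (b : Finset (Fin N)) : ℂ :=
  ∑ p ∈ (pairFinset N).filter (fun p => p.1 ∈ b ∧ p.2 ∈ b), s p.1 p.2

/-- Branch exponent `e_b(s) = (#b − 1) + Σ_{i<j ∈ b} s_{ij}`. -/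
def branchExp {N : ℕ} (s : Fin N → Fin N → ℂ) (b : Finset (Fin N)) : ℂ :=
  ((b.card : ℂ) - 1) + pairSum s b

/-- Level exponent `E_{𝔖,ℓ}(s) = Σ_{b ∈ B(𝔖) ∩ π_ℓ} e_b(s)`. -/
def levelExp {N : ℕ} (S : SplittingFiltration N) (s : Fin N → Fin N → ℂ) (ℓ : ℕ) : ℂ :=
  ∑ b ∈ (S.π ℓ).parts.filter (fun b => 1 < b.card), branchExp s b

/-- `m_ℓ = −1 + n_0 + ⋯ + n_{ℓ−1}`. -/
def mval (n : ℕ → ℕ) (ℓ : ℕ) : ℤ := (∑ t ∈ Finset.range ℓ, (n t : ℤ)) - 1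

/-- Two indices lie in a common block of the partition `P`. -/
def SamePart {N : ℕ} (P : Finpartition (Finset.univ : Finset (Fin N))) (i j : Fin N) : Prop :=
  ∃ b ∈ P.parts, i ∈ b ∧ j ∈ b

/-- `x ∈ T(𝔖, n)`: the level pair associated to `x` is `(𝔖, n)`. -/
def InT {K : Type*} [NormedField K] (q : ℕ) {N : ℕ} (S : SplittingFiltration N)
    (n : ℕ → ℕ) (x : Fin N → K) : Prop :=
  (∀ i, ‖x i‖ ≤ 1) ∧
  (∀ ℓ < S.L, ∀ i j : Fin N,
    SamePart (S.π ℓ) i j ↔ ‖x i - x j‖ ≤ (q : ℝ) ^ (-(mval n (ℓ + 1)))) ∧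
  (∀ i j : Fin N, i ≠ j → ∃ ℓ < S.L, ‖x i - x j‖ = (q : ℝ) ^ (-(mval n (ℓ + 1)))) ∧
  (∀ ℓ < S.L, ∃ i j : Fin N, i ≠ j ∧ ‖x i - x j‖ = (q : ℝ) ^ (-(mval n (ℓ + 1))))

lemma pairFinset_nonempty {N : ℕ} (hN : 2 ≤ N) : (pairFinset N).Nonempty := by
  refine ⟨(⟨0, by omega⟩, ⟨1, by omega⟩), ?_⟩
  simp only [pairFinset, Finset.mem_filter, Finset.mem_univ, true_and]
  exact Fin.mk_lt_mk.mpr (by omega)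

/-- The diameter `max_{i<j} ‖x_i − x_j‖`. -/
def maxDist {K : Type*} [NormedField K] {N : ℕ} (hN : 2 ≤ N) (x : Fin N → K) : ℝ :=
  (pairFinset N).sup' (pairFinset_nonempty hN) fun p => ‖x p.1 - x p.2‖

/-- The minimum distance `min_{i<j} ‖x_i − x_j‖`. -/
def minDist {K : Type*} [NormedField K] {N : ℕ} (hN : 2 ≤ N) (x : Fin N → K) : ℝ :=
  (pairFinset N).inf' (pairFinset_nonempty hN) fun p => ‖x p.1 - x p.2‖


/-!
Write `x_b = q ^ e_b(s)`, so that `‖x_b‖ > 1` for `b ≠ [N]` and no denominator below vanishes.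
A chain of partitions with branch set `F` has as top level the partition whose non-singleton
blocks `R` are the maximal members of `F`, and deleting that level leaves a chain with branch set
`F \ D`, where `D` is the nonempty set of top blocks that split; every such `D` arises exactly
once. Hence the sum `Φ(F)` of `∏_ℓ (∏_{b ∈ π_ℓ} x_b - 1)⁻¹` over all chains with branch set `F`
satisfies `Φ(F) = (∏_{b ∈ R} x_b - 1)⁻¹ ∑_{∅ ≠ D ⊆ R} Φ(F \ D)`, and induction on `F` together
with `∑_{∅ ≠ D ⊆ R} ∏_{b ∈ R \ D} (x_b - 1)⁻¹ = (∏_{b ∈ R} x_b - 1) ∏_{b ∈ R} (x_b - 1)⁻¹` gives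
`Φ(F) = ∏_{b ∈ F} (x_b - 1)⁻¹`. The level functions omit the factor of the top level `{[N]}`, so
their sum is `Φ(B \ {[N]})`. The multiplicities factor out because the degree of a branch counts
the maximal proper sub-branches and singletons inside it, which only depends on the branch set.
-/

section Laminar

variable {α : Type*}

def IsLaminar (F : Finset (Finset α)) : Prop :=
  ∀ b ∈ F, ∀ c ∈ F, b ⊆ c ∨ c ⊆ b ∨ Disjoint b c

lemma IsLaminar.mono {F G : Finset (Finset α)} (hG : IsLaminar G) (h : F ⊆ G) : IsLaminar F :=
  fun b hb c hc => hG b (h hb) c (h hc)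

lemma IsLaminar.union_image_singleton [DecidableEq α] {F : Finset (Finset α)} (hF : IsLaminar F)
    (t : Finset α) : IsLaminar (F ∪ t.image ({·})) := by
  have singleton_cases (x : α) (c : Finset α) : {x} ⊆ c ∨ Disjoint {x} c := by
    by_cases hx : x ∈ c
    · exact Or.inl (singleton_subset_iff.2 hx)
    · exact Or.inr (disjoint_singleton_left.2 hx)
  intro b hb c hc
  simp only [mem_union, mem_image] at hb hc
  rcases hb with hb | ⟨x, -, rfl⟩
  · rcases hc with hc | ⟨y, -, rfl⟩
    · exact hF b hb c hc
    · rcases singleton_cases y b with h | h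
      · exact Or.inr (Or.inl h)
      · exact Or.inr (Or.inr h.symm)
  · rcases singleton_cases x c with h | h
    · exact Or.inl h
    · exact Or.inr (Or.inr h)

lemma IsLaminar.eq_of_maximal {K : Finset (Finset α)} (hK : IsLaminar K) {m₁ m₂ : Finset α}
    (h₁ : Maximal (· ∈ K) m₁) (h₂ : Maximal (· ∈ K) m₂) {x : α} (hx₁ : x ∈ m₁) (hx₂ : x ∈ m₂) :
    m₁ = m₂ := by
  rcases hK m₁ h₁.prop m₂ h₂.prop with h | h | h
  · exact h.antisymm (h₁.2 h₂.prop h)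
  · exact (h₂.2 h₁.prop h).antisymm h
  · exact absurd hx₂ (disjoint_left.1 h hx₁)

def childCandidates [DecidableEq α] (F : Finset (Finset α)) (b : Finset α) : Finset (Finset α) :=
  (F ∪ b.image ({·})).filter (· ⊂ b)

open scoped Classical in
def children [DecidableEq α] (F : Finset (Finset α)) (b : Finset α) : Finset (Finset α) :=
  (childCandidates F b).filter (Maximal (· ∈ childCandidates F b))

lemma mem_children [DecidableEq α] {F : Finset (Finset α)} {b c : Finset α} :
    c ∈ children F b ↔ Maximal (· ∈ childCandidates F b) c := by
  classical
  rw [children, mem_filter]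
  exact and_iff_right_of_imp Maximal.prop

end Laminar

lemma maximal_mem_iff_of_isAntichain {β : Type*} [PartialOrder β] {K T : Set β}
    (hT : IsAntichain (· ≤ ·) T) (hTK : T ⊆ K) (hK : ∀ k ∈ K, ∃ t ∈ T, k ≤ t) {x : β} :
    Maximal (· ∈ K) x ↔ x ∈ T := by
  constructor
  · intro hx
    obtain ⟨t, ht, hxt⟩ := hK x hx.prop
    rwa [hxt.antisymm (hx.2 (hTK ht) hxt)]
  · intro hx
    refine ⟨hTK hx, fun y hy hxy => ?_⟩
    obtain ⟨t, ht, hyt⟩ := hK y hy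
    rwa [hT.eq hx ht (hxy.trans hyt)]

namespace Finpartition

variable {α : Type*} [DecidableEq α] {s : Finset α} {P Q : Finpartition s}
  {F G : Finset (Finset α)} {b c : Finset α}

def nontrivialParts (P : Finpartition s) : Finset (Finset α) :=
  P.parts.filter fun b => 1 < b.card

lemma mem_nontrivialParts : b ∈ P.nontrivialParts ↔ b ∈ P.parts ∧ 1 < #b := mem_filter

lemma nontrivialParts_bot : (⊥ : Finpartition s).nontrivialParts = ∅ := by
  ext b
  simp only [mem_nontrivialParts, mem_bot_iff, notMem_empty, iff_false, not_and]
  rintro ⟨x, -, rfl⟩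
  simp

lemma subset_of_le_of_mem (h : P ≤ Q) (hb : b ∈ P.parts) (hc : c ∈ Q.parts) {x : α}
    (hxb : x ∈ b) (hxc : x ∈ c) : b ⊆ c := by
  obtain ⟨d, hd, hbd⟩ := h hb
  rwa [Q.eq_of_mem_parts hd hc (hbd hxb) hxc] at hbd

lemma eq_of_le_of_subset (h : P ≤ Q) (hb : b ∈ P.parts) (hc : c ∈ Q.parts) (hcb : c ⊆ b) :
    c = b := by
  obtain ⟨x, hx⟩ := Q.nonempty_of_mem_parts hc
  exact hcb.antisymm (subset_of_le_of_mem h hb hc (hcb hx) hx)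

lemma isAntichain_parts (P : Finpartition s) : IsAntichain (· ≤ ·) (P.parts : Set (Finset α)) :=
  fun _ hb _ hc hne hbc => hne (eq_of_le_of_subset le_rfl hc hb hbc)

lemma exists_eq_singleton_of_mem_parts (hb : b ∈ P.parts) (hb1 : ¬1 < #b) : ∃ x, b = {x} :=
  card_eq_one.1 (by have := (P.nonempty_of_mem_parts hb).card_pos; omega)

lemma le_of_forall_nontrivialParts (h : ∀ b ∈ P.nontrivialParts, ∃ c ∈ Q.parts, b ⊆ c) :
    P ≤ Q := by
  intro b hb
  by_cases hb1 : 1 < #b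
  · exact h b (mem_nontrivialParts.2 ⟨hb, hb1⟩)
  · obtain ⟨x, rfl⟩ := exists_eq_singleton_of_mem_parts hb hb1
    obtain ⟨c, hc, hxc⟩ := Q.exists_mem (P.subset hb (mem_singleton_self x))
    exact ⟨c, hc, singleton_subset_iff.2 hxc⟩

def IsTopLevel (P : Finpartition s) (F : Finset (Finset α)) : Prop :=
  P.nontrivialParts ⊆ F ∧ ∀ b ∈ F, ∃ c ∈ P.parts, b ⊆ c

lemma IsTopLevel.le (hP : P.IsTopLevel F) (hQ : Q.IsTopLevel G) (hFG : F ⊆ G) : P ≤ Q :=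
  le_of_forall_nontrivialParts fun b hb => hQ.2 b (hFG (hP.1 hb))

lemma IsTopLevel.unique (hP : P.IsTopLevel F) (hQ : Q.IsTopLevel F) : P = Q :=
  (hP.le hQ subset_rfl).antisymm (hQ.le hP subset_rfl)

lemma isTopLevel_bot : (⊥ : Finpartition s).IsTopLevel ∅ := by
  simp [IsTopLevel, nontrivialParts_bot]

lemma IsTopLevel.nontrivialParts_nonempty (hP : P.IsTopLevel F) (hF1 : ∀ b ∈ F, 1 < #b)
    (hF : F.Nonempty) : P.nontrivialParts.Nonempty := by
  obtain ⟨b, hb⟩ := hF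
  obtain ⟨c, hc, hbc⟩ := hP.2 b hb
  exact ⟨c, mem_nontrivialParts.2 ⟨hc, (hF1 b hb).trans_le (card_le_card hbc)⟩⟩

/-- The blocks are the maximal members of `F` and of the singletons. -/
lemma exists_isTopLevel [Fintype α] (hF : IsLaminar F) (hF1 : ∀ b ∈ F, 1 < #b) :
    ∃ P : Finpartition (univ : Finset α), P.IsTopLevel F := by
  classical
  set K := F ∪ univ.image ({·} : α → Finset α)
  have hK : IsLaminar K := hF.union_image_singleton univ
  have singleton_mem (x : α) : {x} ∈ K := mem_union_right _ (mem_image_of_mem _ (mem_univ x))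
  refine ⟨ofExistsUnique (K.filter (Maximal (· ∈ K))) (fun _ _ => subset_univ _)
    (fun x _ => ?_) (fun h => ?_), fun b hb => ?_, fun b hb => ?_⟩
  · obtain ⟨m, hxm, hm⟩ := K.exists_le_maximal (singleton_mem x)
    refine ⟨m, ⟨mem_filter.2 ⟨hm.prop, hm⟩, singleton_subset_iff.1 hxm⟩, ?_⟩
    rintro m' ⟨hm', hxm'⟩
    exact hK.eq_of_maximal (mem_filter.1 hm').2 hm hxm' (singleton_subset_iff.1 hxm)
  · rcases mem_union.1 (mem_filter.1 h).1 with h | h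
    · simpa using hF1 ∅ h
    · obtain ⟨x, -, hx⟩ := mem_image.1 h
      exact singleton_ne_empty x hx
  · obtain ⟨hbK, hb1⟩ := mem_nontrivialParts.1 hb
    rcases mem_union.1 (mem_filter.1 hbK).1 with h | h
    · exact h
    · obtain ⟨x, -, rfl⟩ := mem_image.1 h
      simp at hb1
  · obtain ⟨m, hbm, hm⟩ := K.exists_le_maximal (mem_union_left _ hb)
    exact ⟨m, mem_filter.2 ⟨hm.prop, hm⟩, hbm⟩

end Finpartition

@[ext]
structure PartitionChain (α : Type*) [Fintype α] [DecidableEq α] where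
  L : ℕ
  π : ℕ → Finpartition (univ : Finset α)
  strict : ∀ ℓ < L, π (ℓ + 1) < π ℓ
  bot_eq : ∀ ℓ, L ≤ ℓ → π ℓ = ⊥

namespace PartitionChain

open Finpartition

variable {α : Type*} [Fintype α] [DecidableEq α] (C : PartitionChain α)
  {P : Finpartition (univ : Finset α)} {F : Finset (Finset α)} {b : Finset α}

def branches : Finset (Finset α) :=
  ((range C.L).biUnion fun ℓ => (C.π ℓ).parts).filter fun b => 1 < b.card

lemma mem_branches : b ∈ C.branches ↔ (∃ ℓ < C.L, b ∈ (C.π ℓ).parts) ∧ 1 < #b := by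
  simp [branches]

lemma antitone : Antitone C.π := antitone_nat_of_succ_le fun ℓ => by
  by_cases h : ℓ < C.L
  · exact (C.strict ℓ h).le
  · rw [C.bot_eq (ℓ + 1) (by omega)]
    exact bot_le

lemma strictAntiOn : StrictAntiOn C.π (Set.Iic C.L) := fun i _ _ hj hij =>
  (C.antitone hij).trans_lt (C.strict i (hij.trans_le hj))

lemma L_lt_card : C.L < Fintype.card (Finpartition (univ : Finset α)) := by
  have hinj : Function.Injective fun i : Fin (C.L + 1) => C.π i := fun i j h =>
    Fin.ext (C.strictAntiOn.injOn (Set.mem_Iic.2 (by omega)) (Set.mem_Iic.2 (by omega)) h)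
  simpa using Fintype.card_le_of_injective _ hinj

instance : Finite (PartitionChain α) := by
  set K := Fintype.card (Finpartition (univ : Finset α))
  refine Finite.of_injective
    (fun C : PartitionChain α => ((⟨C.L, C.L_lt_card⟩ : Fin K), fun ℓ : Fin K => C.π ℓ)) ?_
  intro C D h
  simp only [Prod.mk.injEq, Fin.mk.injEq] at h
  ext1
  · exact h.1
  · funext ℓ
    by_cases hℓ : ℓ < K
    · exact congrFun h.2 ⟨ℓ, hℓ⟩
    · rw [C.bot_eq ℓ (by have := C.L_lt_card; omega), D.bot_eq ℓ (by have := D.L_lt_card; omega)]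

noncomputable instance : Fintype (PartitionChain α) := Fintype.ofFinite _

lemma lt_L_of_mem_parts {ℓ : ℕ} (hb : b ∈ (C.π ℓ).parts) (hb1 : 1 < #b) : ℓ < C.L := by
  by_contra h
  rw [C.bot_eq ℓ (not_lt.1 h)] at hb
  obtain ⟨x, -, rfl⟩ := mem_bot_iff.1 hb
  simp at hb1

lemma isLaminar_branches : IsLaminar C.branches := by
  intro b hb c hc
  obtain ⟨⟨ℓ, -, hbℓ⟩, -⟩ := C.mem_branches.1 hb
  obtain ⟨⟨m, -, hcm⟩, -⟩ := C.mem_branches.1 hc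
  by_cases hd : Disjoint b c
  · exact Or.inr (Or.inr hd)
  obtain ⟨x, hxb, hxc⟩ := not_disjoint_iff.1 hd
  rcases le_total ℓ m with h | h
  · exact Or.inr (Or.inl (subset_of_le_of_mem (C.antitone h) hcm hbℓ hxc hxb))
  · exact Or.inl (subset_of_le_of_mem (C.antitone h) hbℓ hcm hxb hxc)

lemma parts_filter_subset_eq_children {d : ℕ} (hb : b ∈ (C.π d).parts)
    (hb' : b ∉ (C.π (d + 1)).parts) :
    (C.π (d + 1)).parts.filter (· ⊆ b) = children C.branches b := by
  have hsub_b {t : Finset α} (ht : t ∈ (C.π (d + 1)).parts) {x : α} (hxt : x ∈ t) (hxb : x ∈ b) :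
      t ⊆ b :=
    subset_of_le_of_mem (C.antitone (Nat.le_succ d)) ht hb hxt hxb
  ext t
  rw [mem_children]
  refine (maximal_mem_iff_of_isAntichain (K := ↑(childCandidates C.branches b))
    ((C.π (d + 1)).isAntichain_parts.subset (coe_subset.2 (filter_subset (· ⊆ b) _)))
    (fun t ht => ?_) (fun k hk => ?_)).symm
  · obtain ⟨ht, htb⟩ := mem_filter.1 ht
    refine mem_filter.2 ⟨?_, htb.ssubset_of_ne fun h => hb' (h ▸ ht)⟩
    by_cases ht1 : 1 < #t
    · exact mem_union_left _ (C.mem_branches.2 ⟨⟨d + 1, C.lt_L_of_mem_parts ht ht1, ht⟩, ht1⟩)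
    · obtain ⟨x, rfl⟩ := exists_eq_singleton_of_mem_parts ht ht1
      exact mem_union_right _ (mem_image_of_mem _ (htb (mem_singleton_self x)))
  · obtain ⟨hk, hkb⟩ := mem_filter.1 hk
    rcases mem_union.1 hk with hk | hk
    · obtain ⟨⟨m, -, hkm⟩, hk1⟩ := C.mem_branches.1 hk
      have hdm : d + 1 ≤ m := by
        by_contra h
        exact hkb.ne (eq_of_le_of_subset (C.antitone (by omega : m ≤ d)) hb hkm hkb.subset)
      obtain ⟨t, ht, hkt⟩ := C.antitone hdm hkm
      obtain ⟨x, hx⟩ := card_pos.1 (by omega : 0 < #k)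
      exact ⟨t, mem_filter.2 ⟨ht, hsub_b ht (hkt hx) (hkb.subset hx)⟩, hkt⟩
    · obtain ⟨x, hxb, rfl⟩ := mem_image.1 hk
      obtain ⟨t, ht, hxt⟩ := (C.π (d + 1)).exists_mem (mem_univ x)
      exact ⟨t, mem_filter.2 ⟨ht, hsub_b ht hxt hxb⟩, singleton_subset_iff.2 hxt⟩

lemma isTopLevel_zero : (C.π 0).IsTopLevel C.branches := by
  refine ⟨fun b hb => ?_, fun b hb => ?_⟩
  · rcases Nat.eq_zero_or_pos C.L with hL | hL
    · rw [C.bot_eq 0 hL.le, nontrivialParts_bot] at hb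
      simp at hb
    · obtain ⟨hb, hb1⟩ := mem_nontrivialParts.1 hb
      exact C.mem_branches.2 ⟨⟨0, hL, hb⟩, hb1⟩
  · obtain ⟨⟨ℓ, -, hb⟩, -⟩ := C.mem_branches.1 hb
    exact C.antitone (Nat.zero_le ℓ) hb

lemma π_zero_eq (hP : P.IsTopLevel C.branches) : C.π 0 = P :=
  C.isTopLevel_zero.unique hP

lemma L_pos (h : C.branches.Nonempty) : 0 < C.L := by
  obtain ⟨b, hb⟩ := h
  obtain ⟨⟨ℓ, hℓ, -⟩, -⟩ := C.mem_branches.1 hb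
  omega

def nil : PartitionChain α where
  L := 0
  π _ := ⊥
  strict _ h := absurd h (Nat.not_lt_zero _)
  bot_eq _ _ := rfl

lemma branches_eq_empty_iff : C.branches = ∅ ↔ C = nil := by
  constructor
  · intro h
    have hL : C.L = 0 := by
      by_contra hL
      have h0 : C.π 0 = ⊥ := C.π_zero_eq (h ▸ isTopLevel_bot)
      exact not_lt_bot (h0 ▸ C.strict 0 (by omega))
    ext1
    · exact hL
    · funext ℓ
      exact C.bot_eq ℓ (by omega)
  · rintro rfl
    simp [branches, nil]

def tail : PartitionChain α where
  L := C.L - 1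
  π ℓ := C.π (ℓ + 1)
  strict ℓ hℓ := C.strict (ℓ + 1) (by omega)
  bot_eq ℓ hℓ := C.bot_eq (ℓ + 1) (by omega)

def cons (P : Finpartition (univ : Finset α)) (C : PartitionChain α) (h : C.π 0 < P) :
    PartitionChain α where
  L := C.L + 1
  π
    | 0 => P
    | ℓ + 1 => C.π ℓ
  strict
    | 0, _ => h
    | ℓ + 1, hℓ => C.strict ℓ (by omega)
  bot_eq
    | 0, hℓ => absurd hℓ (by omega)
    | ℓ + 1, hℓ => C.bot_eq ℓ (by omega)

lemma tail_cons (h : C.π 0 < P) : (cons P C h).tail = C := rfl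

lemma cons_tail (hL : 0 < C.L) (hP : C.π 0 = P) (h : C.tail.π 0 < P) : cons P C.tail h = C := by
  subst hP
  ext1
  · show C.L - 1 + 1 = C.L
    omega
  · funext ℓ
    cases ℓ <;> rfl

lemma branches_eq_union_tail (hL : 0 < C.L) :
    C.branches = (C.π 0).nontrivialParts ∪ C.tail.branches := by
  ext b
  simp only [mem_branches, mem_union, mem_nontrivialParts, tail]
  constructor
  · rintro ⟨⟨_ | ℓ, hℓ, hb⟩, hb1⟩
    · exact Or.inl ⟨hb, hb1⟩
    · exact Or.inr ⟨⟨ℓ, by omega, hb⟩, hb1⟩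
  · rintro (⟨hb, hb1⟩ | ⟨⟨ℓ, hℓ, hb⟩, hb1⟩)
    · exact ⟨⟨0, hL, hb⟩, hb1⟩
    · exact ⟨⟨ℓ + 1, by omega, hb⟩, hb1⟩

lemma branches_cons (h : C.π 0 < P) :
    (cons P C h).branches = P.nontrivialParts ∪ C.branches :=
  (cons P C h).branches_eq_union_tail (Nat.succ_pos _)

lemma exists_nontrivialParts_zero_notMem_tail (hL : 0 < C.L) :
    ∃ b ∈ (C.π 0).nontrivialParts, b ∉ C.tail.branches := by
  by_contra! h
  refine (C.strict 0 hL).not_ge (le_of_forall_nontrivialParts fun b hb => ?_)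
  obtain ⟨⟨ℓ, -, hbℓ⟩, -⟩ := C.tail.mem_branches.1 (h b hb)
  exact C.antitone (by omega : 0 + 1 ≤ ℓ + 1) hbℓ

lemma π_zero_lt_of_branches_eq_sdiff {D : Finset (Finset α)} (hP : P.IsTopLevel F)
    (hD : D ⊆ P.nontrivialParts) (hDne : D.Nonempty) (hC : C.branches = F \ D) : C.π 0 < P := by
  have h0 := C.isTopLevel_zero
  rw [hC] at h0
  refine (h0.le hP sdiff_subset).lt_of_ne fun h => ?_
  obtain ⟨d, hd⟩ := hDne
  exact (mem_sdiff.1 (h0.1 (h ▸ hD hd))).2 hd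

lemma prod_Ico_one_eq_prod_tail {M : Type*} [CommMonoid M]
    (f : Finpartition (univ : Finset α) → M) :
    ∏ ℓ ∈ Ico 1 C.L, f (C.π ℓ) = ∏ ℓ ∈ range C.tail.L, f (C.tail.π ℓ) := by
  rcases Nat.eq_zero_or_pos C.L with hL | hL
  · simp [tail, hL]
  · rw [range_eq_Ico]
    show _ = ∏ ℓ ∈ Ico 0 (C.L - 1), f (C.π (ℓ + 1))
    rw [prod_Ico_add' (fun ℓ => f (C.π ℓ)), zero_add, Nat.sub_add_cancel hL]

end PartitionChain

lemma sum_powerset_nonempty_prod_sdiff {ι K : Type*} [DecidableEq ι] [Field K] (R : Finset ι)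
    (x : ι → K) (hx : ∀ b ∈ R, x b ≠ 1) :
    ∑ D ∈ R.powerset.filter (·.Nonempty), ∏ b ∈ R \ D, (x b - 1)⁻¹ =
      (∏ b ∈ R, x b - 1) * ∏ b ∈ R, (x b - 1)⁻¹ := by
  have hfilter : R.powerset.filter (·.Nonempty) = R.powerset.erase ∅ := by
    simp only [nonempty_iff_ne_empty, filter_ne']
  have hone_add : ∀ b ∈ R, 1 + (x b - 1)⁻¹ = x b * (x b - 1)⁻¹ := fun b hb => by
    field_simp [sub_ne_zero.2 (hx b hb)]
    ring
  calc _ = ∏ b ∈ R, (1 + (x b - 1)⁻¹) - ∏ b ∈ R, (x b - 1)⁻¹ := by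
        rw [prod_add, ← sum_erase_add _ _ (empty_mem_powerset R), hfilter]
        simp
    _ = _ := by
        rw [prod_congr rfl hone_add, prod_mul_distrib]
        ring

namespace PartitionChain

open Finpartition

variable {α : Type*} [Fintype α] [DecidableEq α] {P : Finpartition (univ : Finset α)}
  {F : Finset (Finset α)}

section Sums

variable {K : Type*} [CommSemiring K] (w : Finpartition (univ : Finset α) → K)

def chainSum (F : Finset (Finset α)) : K :=
  ∑ C ∈ univ.filter (fun C : PartitionChain α => C.branches = F), ∏ ℓ ∈ range C.L, w (C.π ℓ)

def tailSum (F : Finset (Finset α)) : K :=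
  ∑ C ∈ univ.filter (fun C : PartitionChain α => C.branches = F), ∏ ℓ ∈ Ico 1 C.L, w (C.π ℓ)

lemma chainSum_empty : chainSum w ∅ = 1 := by
  have : univ.filter (fun C : PartitionChain α => C.branches = ∅) = {nil} := by
    ext C
    simp [branches_eq_empty_iff]
  rw [chainSum, this, sum_singleton]
  rfl

lemma chainSum_eq_mul_tailSum (hF : F.Nonempty) (hP : P.IsTopLevel F) :
    chainSum w F = w P * tailSum w F := by
  rw [chainSum, tailSum, mul_sum]
  refine sum_congr rfl fun C hC => ?_
  obtain ⟨-, rfl⟩ := mem_filter.1 hC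
  rw [prod_range_eq_mul_Ico _ (C.L_pos hF), C.π_zero_eq hP]

/-- Removing the top level is a bijection from the chains with branch set `F` onto the chains
with branch set `F \ D`, `D` running over the nonempty sets of blocks of the top level. -/
lemma tailSum_eq_sum_chainSum (hF : F.Nonempty) (hP : P.IsTopLevel F) :
    tailSum w F = ∑ D ∈ P.nontrivialParts.powerset.filter (·.Nonempty), chainSum w (F \ D) := by
  have mem_sigma_iff (E : Σ _ : Finset (Finset α), PartitionChain α) :
      E ∈ (P.nontrivialParts.powerset.filter (·.Nonempty)).sigma
          (fun D => univ.filter (fun C : PartitionChain α => C.branches = F \ D)) ↔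
        E.1 ⊆ P.nontrivialParts ∧ E.1.Nonempty ∧ E.2.branches = F \ E.1 := by
    simp [and_assoc]
  simp only [tailSum, chainSum]
  rw [sum_sigma']
  refine sum_bij' (fun C _ => ⟨F \ C.tail.branches, C.tail⟩)
    (fun E hE => cons P E.2 (E.2.π_zero_lt_of_branches_eq_sdiff hP ((mem_sigma_iff E).1 hE).1
      ((mem_sigma_iff E).1 hE).2.1 ((mem_sigma_iff E).1 hE).2.2)) (fun C hC => ?_) (fun E hE => ?_)
    (fun C hC => ?_) (fun E hE => ?_) (fun C _ => C.prod_Ico_one_eq_prod_tail w)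
  · obtain ⟨-, hCF⟩ := mem_filter.1 hC
    have hL := C.L_pos (hCF ▸ hF)
    have hC0 := C.π_zero_eq (hCF ▸ hP)
    have hsplit := C.branches_eq_union_tail hL
    rw [hCF, hC0] at hsplit
    obtain ⟨b, hb, hbt⟩ := C.exists_nontrivialParts_zero_notMem_tail hL
    rw [hC0] at hb
    refine (mem_sigma_iff _).2 ⟨fun b hb => ?_, ⟨b, mem_sdiff.2 ⟨hP.1 hb, hbt⟩⟩, ?_⟩
    · obtain ⟨hbF, hbt⟩ := mem_sdiff.1 hb
      exact (mem_union.1 (hsplit ▸ hbF)).resolve_right hbt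
    · exact (Finset.sdiff_sdiff_eq_self (hsplit ▸ subset_union_right)).symm
  · obtain ⟨hDP, -, hE⟩ := (mem_sigma_iff E).1 hE
    refine mem_filter.2 ⟨mem_univ _, ?_⟩
    rw [branches_cons, hE]
    refine (union_subset hP.1 sdiff_subset).antisymm fun b hb => ?_
    by_cases hbD : b ∈ E.1
    · exact mem_union_left _ (hDP hbD)
    · exact mem_union_right _ (mem_sdiff.2 ⟨hb, hbD⟩)
  · obtain ⟨-, hCF⟩ := mem_filter.1 hC
    exact C.cons_tail (C.L_pos (hCF ▸ hF)) (C.π_zero_eq (hCF ▸ hP)) _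
  · obtain ⟨hDP, -, hE⟩ := (mem_sigma_iff E).1 hE
    refine Sigma.ext ?_ HEq.rfl
    rw [tail_cons, hE, Finset.sdiff_sdiff_eq_self (hDP.trans hP.1)]

lemma tailSum_eq_chainSum_erase {a : Finset α} (hP : P.IsTopLevel F)
    (ha : P.nontrivialParts = {a}) : tailSum w F = chainSum w (F.erase a) := by
  have hD : ({a} : Finset (Finset α)).powerset.filter (·.Nonempty) = {{a}} := by
    ext D
    simp only [mem_filter, mem_powerset, subset_singleton_iff, mem_singleton]
    aesop
  rw [tailSum_eq_sum_chainSum w ⟨a, hP.1 (ha ▸ mem_singleton_self a)⟩ hP, ha, hD, sum_singleton,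
    sdiff_singleton_eq_erase]

end Sums

def levelWeight {K : Type*} [Field K] (x : Finset α → K) (P : Finpartition (univ : Finset α)) :
    K :=
  (∏ b ∈ P.nontrivialParts, x b - 1)⁻¹

theorem chainSum_levelWeight {K : Type*} [NormedField K] (x : Finset α → K) (hF : IsLaminar F)
    (hF1 : ∀ b ∈ F, 1 < #b) (hx : ∀ b ∈ F, 1 < ‖x b‖) :
    chainSum (levelWeight x) F = ∏ b ∈ F, (x b - 1)⁻¹ := by
  induction F using Finset.strongInduction with
  | H F ih =>
  rcases F.eq_empty_or_nonempty with rfl | hne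
  · rw [chainSum_empty, prod_empty]
  obtain ⟨P, hP⟩ := exists_isTopLevel hF hF1
  set R := P.nontrivialParts
  have hRF : R ⊆ F := hP.1
  have hxR : ∀ b ∈ R, x b ≠ 1 := fun b hb h => by simpa [h] using hx b (hRF hb)
  have hprod : ∏ b ∈ R, x b - 1 ≠ 0 := by
    have : 1 < ‖∏ b ∈ R, x b‖ := by
      rw [norm_prod]
      simpa using prod_lt_prod_of_nonempty (fun _ _ => one_pos) (fun b hb => hx b (hRF hb))
        (hP.nontrivialParts_nonempty hF1 hne)
    exact sub_ne_zero.2 fun h => by simp [h] at this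
  have hstep : ∀ D ∈ R.powerset.filter (·.Nonempty), chainSum (levelWeight x) (F \ D) =
      (∏ b ∈ R \ D, (x b - 1)⁻¹) * ∏ b ∈ F \ R, (x b - 1)⁻¹ := by
    intro D hD
    obtain ⟨hDR, hDne⟩ : D ⊆ R ∧ D.Nonempty := by simpa using hD
    rw [ih (F \ D) (sdiff_ssubset (hDR.trans hRF) hDne) (hF.mono sdiff_subset)
      (fun b hb => hF1 b (mem_sdiff.1 hb).1) (fun b hb => hx b (mem_sdiff.1 hb).1),
      ← prod_sdiff (sdiff_subset_sdiff subset_rfl hDR), sdiff_sdiff_sdiff_cancel_left hRF]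
  rw [chainSum_eq_mul_tailSum _ hne hP, tailSum_eq_sum_chainSum _ hne hP, sum_congr rfl hstep,
    ← sum_mul, sum_powerset_nonempty_prod_sdiff R x hxR, levelWeight, ← prod_sdiff hRF,
    ← mul_assoc, ← mul_assoc, inv_mul_cancel₀ hprod, one_mul, mul_comm]

end PartitionChain

lemma Complex.cpow_sum {x : ℂ} (hx : x ≠ 0) {ι : Type*} (s : Finset ι) (e : ι → ℂ) :
    x ^ (∑ i ∈ s, e i) = ∏ i ∈ s, x ^ e i := by
  simp only [Complex.cpow_def_of_ne_zero hx, mul_sum, Complex.exp_sum]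

namespace SplittingFiltration

open Finpartition PartitionChain

variable {N : ℕ} (S : SplittingFiltration N) {b : Finset (Fin N)}

def toChain : PartitionChain (Fin N) := ⟨S.L, S.π, S.strict, S.bot_eq⟩

lemma bddAbove_levels : BddAbove {ℓ | ℓ < S.L ∧ b ∈ (S.π ℓ).parts} :=
  ⟨S.L, fun _ h => h.1.le⟩

lemma mem_parts_depth (hb : b ∈ S.branches) : b ∈ (S.π (S.depth b)).parts := by
  obtain ⟨⟨ℓ, hℓ, hbℓ⟩, -⟩ := S.toChain.mem_branches.1 hb
  exact (Nat.sSup_mem (show {ℓ | ℓ < S.L ∧ b ∈ (S.π ℓ).parts}.Nonempty from ⟨ℓ, hℓ, hbℓ⟩)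
    S.bddAbove_levels).2

lemma notMem_parts_depth_succ (hb : b ∈ S.branches) : b ∉ (S.π (S.depth b + 1)).parts := by
  intro h
  have hlt := S.toChain.lt_L_of_mem_parts h (S.toChain.mem_branches.1 hb).2
  exact (Nat.lt_succ_self _).not_ge (le_csSup S.bddAbove_levels ⟨hlt, h⟩)

lemma deg_eq_card_children (hb : b ∈ S.branches) : S.deg b = #(children S.branches b) :=
  congrArg card <| S.toChain.parts_filter_subset_eq_children (S.mem_parts_depth hb)
    (S.notMem_parts_depth_succ hb)

lemma mult_eq_of_branches_eq {S' : SplittingFiltration N} (h : S.branches = S'.branches)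
    (q : ℕ) : S.mult q = S'.mult q := by
  rw [mult, mult, h]
  refine prod_congr rfl fun b hb => ?_
  rw [S.deg_eq_card_children (h ▸ hb), S'.deg_eq_card_children hb, h]

def equivChains (Sstar : SplittingFiltration N) :
    {S : SplittingFiltration N // S.branches = Sstar.branches} ≃
      univ.filter (fun C : PartitionChain (Fin N) => C.branches = Sstar.branches) where
  toFun S := ⟨S.1.toChain, mem_filter.2 ⟨mem_univ _, S.2⟩⟩
  invFun C :=
    have hC := (mem_filter.1 C.2).2
    ⟨⟨C.1.L, C.1.π, by
      rw [C.1.π_zero_eq (by rw [hC]; exact Sstar.toChain.isTopLevel_zero)]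
      exact Sstar.top_eq,
      C.1.strict, C.1.bot_eq⟩, hC⟩
  left_inv _ := rfl
  right_inv _ := rfl

lemma tsum_prod_Ico_eq_tailSum {K : Type*} [CommSemiring K] [TopologicalSpace K]
    (Sstar : SplittingFiltration N) (w : Finpartition (univ : Finset (Fin N)) → K) :
    ∑' S : {S : SplittingFiltration N // S.branches = Sstar.branches},
        ∏ ℓ ∈ Ico 1 S.1.L, w (S.1.π ℓ) = tailSum w Sstar.branches := by
  rw [tailSum, ← Finset.tsum_subtype, ← Sstar.equivChains.tsum_eq]
  rfl

lemma inv_natCast_cpow_levelExp_sub_one {q : ℕ} (hq : q ≠ 0) (s : Fin N → Fin N → ℂ) (ℓ : ℕ) :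
    ((q : ℂ) ^ levelExp S s ℓ - 1)⁻¹ = levelWeight (fun b => (q : ℂ) ^ branchExp s b) (S.π ℓ) := by
  rw [levelWeight, levelExp, Complex.cpow_sum (Nat.cast_ne_zero.2 hq)]
  rfl

end SplittingFiltration

open Finpartition PartitionChain

theorem sum_level_eq_branch_general (N : ℕ) (hN : 2 ≤ N) (q : ℕ) (hq : 1 < q)
    (Sstar : SplittingFiltration N)
    (s : Fin N → Fin N → ℂ)
    (hs : ∀ b ∈ Sstar.branches, b ≠ Finset.univ → 0 < (branchExp s b).re) :
    ∑' S : {S : SplittingFiltration N // S.branches = Sstar.branches},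
        (S.1.mult q : ℂ) / (q : ℂ) ^ (N - 1) *
          ∏ ℓ ∈ Finset.Ico 1 S.1.L, ((q : ℂ) ^ levelExp S.1 s ℓ - 1)⁻¹ =
      (Sstar.mult q : ℂ) / (q : ℂ) ^ (N - 1) *
        ∏ b ∈ Sstar.branches.filter (fun b => b ≠ Finset.univ),
          ((q : ℂ) ^ branchExp s b - 1)⁻¹ := by
  set x : Finset (Fin N) → ℂ := fun b => (q : ℂ) ^ branchExp s b
  have htop : (Sstar.π 0).nontrivialParts = {univ} := by
    rw [nontrivialParts, Sstar.top_eq, filter_singleton, if_pos (by simp; omega)]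
  have hx : ∀ b ∈ Sstar.branches.erase univ, 1 < ‖x b‖ := fun b hb => by
    rw [Complex.norm_natCast_cpow_of_pos (by omega)]
    exact Real.one_lt_rpow (by exact_mod_cast hq) (hs b (mem_of_mem_erase hb) (ne_of_mem_erase hb))
  calc _ = (Sstar.mult q : ℂ) / (q : ℂ) ^ (N - 1) *
        ∑' S : {S : SplittingFiltration N // S.branches = Sstar.branches},
          ∏ ℓ ∈ Ico 1 S.1.L, levelWeight x (S.1.π ℓ) := by
        rw [← tsum_mul_left]
        refine tsum_congr fun S => ?_
        simp only [S.1.mult_eq_of_branches_eq S.2,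
          S.1.inv_natCast_cpow_levelExp_sub_one (by omega : q ≠ 0), x]
    _ = (Sstar.mult q : ℂ) / (q : ℂ) ^ (N - 1) *
        chainSum (levelWeight x) (Sstar.branches.erase univ) := by
        rw [Sstar.tsum_prod_Ico_eq_tailSum,
          tailSum_eq_chainSum_erase (F := Sstar.branches) _ Sstar.toChain.isTopLevel_zero htop]
    _ = _ := by
        rw [chainSum_levelWeight (F := Sstar.branches.erase univ) x
          (Sstar.toChain.isLaminar_branches.mono (erase_subset _ _))
          (fun b hb => (Sstar.toChain.mem_branches.1 (mem_of_mem_erase hb)).2) hx, filter_ne']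

/-- for reduced `𝔖*` with `M_{𝔖*,q} > 0` and `s ∈ BP_{𝔖*}`, the sum of
the level functions `J_{𝔖,q}(0,s)` over all `𝔖` with `B(𝔖) = B(𝔖*)` equals the branch
function `I_{𝔖*,q}(s)`. -/
theorem sum_level_eq_branch (N : ℕ) (hN : 2 ≤ N) (q : ℕ) (hq : 1 < q)
    (Sstar : SplittingFiltration N) (hred : Sstar.Reduced) (hM : 0 < Sstar.mult q)
    (s : Fin N → Fin N → ℂ)
    (hs : ∀ b ∈ Sstar.branches, b ≠ Finset.univ → 0 < (branchExp s b).re) :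
    ∑' S : {S : SplittingFiltration N // S.branches = Sstar.branches},
        (S.1.mult q : ℂ) / (q : ℂ) ^ (N - 1) *
          ∏ ℓ ∈ Finset.Ico 1 S.1.L, ((q : ℂ) ^ levelExp S.1 s ℓ - 1)⁻¹ =
      (Sstar.mult q : ℂ) / (q : ℂ) ^ (N - 1) *
        ∏ b ∈ Sstar.branches.filter (fun b => b ≠ Finset.univ),
          ((q : ℂ) ^ branchExp s b - 1)⁻¹ :=
  sum_level_eq_branch_general N hN q hq Sstar s hs
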